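/- Let p ≥ 1 be an integer, let N be a p-rooted almost-binary phylogenetic network on X, and let {Z_1, ..., Z_d} be the maximal zig-zag trail decomposition of N. For any S ⊆ E(N), the induced subgraph N[S] is a support network of N if and only if S ∩ E(Z_i) is an A-admissible subset of E(Z_i) for every i ∈ [1, d]. -/

import Mathlib

open Finset

variable {V : Type} [DecidableEq V] [Fintype V]

/-- The vertex set of the digraph given by the edge set `E`. -/
def verts (E : Finset (V × V)) : Finset V :=
  E.image Prod.fst ∪ E.image Prod.snd

/-- In-degree of `v` in the digraph with edge set `E`. -/
def indeg (E : Finset (V × V)) (v : V) : ℕ :=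
  (E.filter fun e => e.2 = v).card

/-- Out-degree of `v` in the digraph with edge set `E`. -/
def outdeg (E : Finset (V × V)) (v : V) : ℕ :=
  (E.filter fun e => e.1 = v).card

/-- `E` is (the edge set of) a `p`-rooted almost-binary phylogenetic network on `X`:
a finite simple DAG with exactly `p` in-degree-0 vertices, each of out-degree 1 or 2 (the roots),
whose set of in-degree-1, out-degree-0 vertices is `X` (the leaves), and all of whose other
vertices have in-degree and out-degree in `{1, 2}`. -/
structure IsPhyloNet (E : Finset (V × V)) (p : ℕ) (X : Finset V) : Prop where
  acyclic : ∀ v : V, ¬ Relation.TransGen (fun a b => (a, b) ∈ E) v v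
  roots_card : ((verts E).filter fun v => indeg E v = 0).card = p
  root_outdeg : ∀ v ∈ verts E, indeg E v = 0 → outdeg E v = 1 ∨ outdeg E v = 2
  leaves_eq : (verts E).filter (fun v => indeg E v = 1 ∧ outdeg E v = 0) = X
  internal_deg : ∀ v ∈ verts E, indeg E v ≠ 0 → v ∉ X →
    (indeg E v = 1 ∨ indeg E v = 2) ∧ (outdeg E v = 1 ∨ outdeg E v = 2)

/-- Two directed edges share a tail or share a head. -/
def Shares (e f : V × V) : Prop := e.1 = f.1 ∨ e.2 = f.2

/-- `S` is (the edge set of) a zig-zag trail of the digraph `E`: a subgraph with `m ≥ 1`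
edges which can be ordered so that consecutive edges share a head or share a tail. -/
def IsZigzagTrail (E S : Finset (V × V)) : Prop :=
  S ⊆ E ∧ ∃ l : List (V × V), l ≠ [] ∧ l.Nodup ∧ l.toFinset = S ∧ l.Chain' Shares

/-- A maximal zig-zag trail: one that is not a proper subgraph of another zig-zag trail. -/
def IsMaximalZigzagTrail (E S : Finset (V × V)) : Prop :=
  IsZigzagTrail E S ∧ ∀ S', IsZigzagTrail E S' → ¬ S ⊂ S'

/-- The `i`-th edge (0-indexed) of a zig-zag sequence on vertices `f 0, f 1, ...`;
when `down = true` the first edge descends (`f 0 > f 1`), and directions alternate. -/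
def zigEdge (f : ℕ → V) (down : Bool) (i : ℕ) : V × V :=
  if decide (i % 2 = 0) = down then (f i, f (i + 1)) else (f (i + 1), f i)

/-- `S` consists of the `m` distinct edges of the zig-zag sequence on `f 0, ..., f m`. -/
def IsZigzagShape (S : Finset (V × V)) (m : ℕ) (f : ℕ → V) (down : Bool) : Prop :=
  S = (Finset.range m).image (zigEdge f down) ∧
  ∀ i < m, ∀ j < m, zigEdge f down i = zigEdge f down j → i = j

/-- A crown: an even number `m` of edges written cyclically as `v₀ > v₁ < ⋯ < v_m = v₀`. -/
def IsCrown (S : Finset (V × V)) : Prop :=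
  ∃ m f, 1 ≤ m ∧ m % 2 = 0 ∧ f m = f 0 ∧ IsZigzagShape S m f true

/-- An M-fence: a non-crown with an even number `m` of edges,
of the form `v₀ < v₁ > ⋯ > v_m ≠ v₀`. -/
def IsMFence (S : Finset (V × V)) : Prop :=
  ¬ IsCrown S ∧ ∃ m f, 1 ≤ m ∧ m % 2 = 0 ∧ f m ≠ f 0 ∧ IsZigzagShape S m f false

/-- A W-fence: a non-crown with an even number `m` of edges,
of the form `v₀ > v₁ < ⋯ < v_m ≠ v₀`. -/
def IsWFence (S : Finset (V × V)) : Prop :=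
  ¬ IsCrown S ∧ ∃ m f, 1 ≤ m ∧ m % 2 = 0 ∧ f m ≠ f 0 ∧ IsZigzagShape S m f true

/-- An N-fence: a non-crown with an odd number `m` of edges,
of the form `v₀ > v₁ < ⋯ > v_m`. -/
def IsNFence (S : Finset (V × V)) : Prop :=
  ¬ IsCrown S ∧ ∃ m f, m % 2 = 1 ∧ IsZigzagShape S m f true

/-- A support network of `N = (V, E)`: a spanning subgraph that is itself a
`p`-rooted almost-binary phylogenetic network on `X` (identified with its edge set). -/
def IsSupportNet (E S : Finset (V × V)) (p : ℕ) (X : Finset V) : Prop :=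
  S ⊆ E ∧ verts S = verts E ∧ IsPhyloNet S p X

/-- A minimal support network: no support network is a proper subgraph of it. -/
def IsMinimalSupportNet (E S : Finset (V × V)) (p : ℕ) (X : Finset V) : Prop :=
  IsSupportNet E S p X ∧ ∀ S', IsSupportNet E S' p X → ¬ S' ⊂ S

/-- A minimum support network: one with the fewest edges among all support networks. -/
def IsMinimumSupportNet (E S : Finset (V × V)) (p : ℕ) (X : Finset V) : Prop :=
  IsSupportNet E S p X ∧ ∀ S', IsSupportNet E S' p X → S.card ≤ S'.card

/-- `S ⊆ Z` is A-admissible (degrees taken in the ambient network `E`):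
(C1) `S` contains every edge `(u,v)` of `Z` with `outdeg u = 1` or `indeg v = 1`;
(C2) of any two distinct edges of `Z` sharing a tail or a head, `S` contains at least one. -/
def AAdmissible (E Z S : Finset (V × V)) : Prop :=
  S ⊆ Z ∧
  (∀ e ∈ Z, (outdeg E e.1 = 1 ∨ indeg E e.2 = 1) → e ∈ S) ∧
  (∀ e₁ ∈ Z, ∀ e₂ ∈ Z, e₁ ≠ e₂ → Shares e₁ e₂ → e₁ ∈ S ∨ e₂ ∈ S)

/-- A B-admissible subset: an A-admissible subset none of whose proper subsets
is A-admissible. -/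
def BAdmissible (E Z S : Finset (V × V)) : Prop :=
  AAdmissible E Z S ∧ ∀ S', S' ⊂ S → ¬ AAdmissible E Z S'

/-- A C-admissible subset: an A-admissible subset of minimum cardinality. -/
def CAdmissible (E Z S : Finset (V × V)) : Prop :=
  AAdmissible E Z S ∧ ∀ S', AAdmissible E Z S' → S.card ≤ S'.card

/-- One subdivision step: an edge `(u, v)` is replaced by `(u, w), (w, v)` for a fresh
vertex `w`. -/
def SubdivStep (T T' : Finset (V × V)) : Prop :=
  ∃ u w v, (u, v) ∈ T ∧ w ∉ verts T ∧
    T' = insert (u, w) (insert (w, v) (T.erase (u, v)))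

/-- `S` is a subdivision of `T` (zero or more subdivision steps). -/
def IsSubdivisionOf (S T : Finset (V × V)) : Prop :=
  Relation.ReflTransGen SubdivStep T S

/-- A rooted binary phylogenetic tree on `X`: a 1-rooted network on `X` in which every
non-root, non-leaf vertex has in-degree 1 and out-degree 2. -/
def IsBinaryPhyloTree (T : Finset (V × V)) (X : Finset V) : Prop :=
  IsPhyloNet T 1 X ∧
  ∀ v ∈ verts T, indeg T v ≠ 0 → v ∉ X → indeg T v = 1 ∧ outdeg T v = 2

/-- `N = (V, E)` is tree-based: it has a support tree, i.e. a spanning subgraph that is a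
subdivision of some rooted binary phylogenetic tree on `X`. -/
def IsTreeBased (E : Finset (V × V)) (X : Finset V) : Prop :=
  ∃ S T, S ⊆ E ∧ verts S = verts E ∧ IsBinaryPhyloTree T X ∧ IsSubdivisionOf S T

/-- The underlying undirected simple graph of the digraph with edge set `S`. -/
def usym (S : Finset (V × V)) : SimpleGraph V where
  Adj u v := u ≠ v ∧ ((u, v) ∈ S ∨ (v, u) ∈ S)
  symm := ⟨fun _ _ h => ⟨h.1.symm, h.2.symm⟩⟩
  loopless := ⟨fun _ h => h.1 rfl⟩

/-- Two edges of `S` lie in a common block of the underlying undirected graph: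
they are equal or lie on a common cycle. -/
def SameBlock (S : Finset (V × V)) (e f : V × V) : Prop :=
  e = f ∨ ∃ (a : V) (w : (usym S).Walk a a), w.IsCycle ∧
    s(e.1, e.2) ∈ w.edges ∧ s(f.1, f.2) ∈ w.edges

/-- The number of reticulations (in-degree-2 vertices) contained in the block of the
edge `e` of `S`. -/
noncomputable def blockReticCount (S : Finset (V × V)) (e : V × V) : ℕ :=
  Set.ncard {v : V | indeg S v = 2 ∧ ∃ f ∈ S, SameBlock S e f ∧ (f.1 = v ∨ f.2 = v)}

/-- The level of the network with edge set `S`: the maximum number of reticulations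
contained in a block. -/
noncomputable def level (S : Finset (V × V)) : ℕ :=
  S.sup (blockReticCount S)

/-!
A spanning subgraph `S ⊆ E` is a support network exactly when no vertex loses all of its
in-edges or all of its out-edges: a lost in-edge would create an extra root, a lost out-edge a
vertex that is neither a root, a leaf nor internal; conversely, if every vertex keeps an in- and
an out-edge, roots, leaves and internal vertices are the same as in `E`. Because all in- and
out-degrees are at most two, this says precisely that (C1) and (C2) hold for all edges of `E`.
These conditions only relate edges sharing a tail or a head, and such edges lie in the same
maximal zig-zag trail: an edge shares an endpoint with at most two other edges, so if `f ∉ Z`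
shares one with `e ∈ Z`, then `e` has only one neighbour in the trail `Z`, i.e. it is an end of
`Z`, and `f` could be attached there.
-/

namespace Finset

variable {α : Type*} {s : Finset α} {a b x : α}

lemma eq_or_eq_of_card_le_two (hs : s.card ≤ 2) (ha : a ∈ s) (hb : b ∈ s) (hab : a ≠ b)
    (hx : x ∈ s) : x = a ∨ x = b := by
  by_contra! h
  exact absurd (two_lt_card.mpr ⟨a, ha, b, hb, x, hx, hab, h.1.symm, h.2.symm⟩) (not_lt.mpr hs)

end Finset

section Fibres

variable {β γ : Type*} [DecidableEq γ] (π : β → γ) {E S : Finset β}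

lemma forall_card_filter_pos_iff (hS : S ⊆ E) (hE : ∀ c, (E.filter (π · = c)).card ≤ 2) :
    (∀ c, 0 < (E.filter (π · = c)).card → 0 < (S.filter (π · = c)).card) ↔
      (∀ e ∈ E, (E.filter (π · = π e)).card = 1 → e ∈ S) ∧
      ∀ e₁ ∈ E, ∀ e₂ ∈ E, e₁ ≠ e₂ → π e₁ = π e₂ → e₁ ∈ S ∨ e₂ ∈ S := by
  simp only [Finset.card_pos, Finset.filter_nonempty_iff]
  constructor
  · intro h
    refine ⟨fun e he h1 => ?_, fun e₁ he₁ e₂ he₂ hne heq => ?_⟩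
    · obtain ⟨f, hf, hfe⟩ := h (π e) ⟨e, he, rfl⟩
      have := Finset.card_le_one.mp h1.le f (Finset.mem_filter.mpr ⟨hS hf, hfe⟩) e
        (Finset.mem_filter.mpr ⟨he, rfl⟩)
      exact this ▸ hf
    · obtain ⟨f, hf, hfe⟩ := h (π e₁) ⟨e₁, he₁, rfl⟩
      rcases Finset.eq_or_eq_of_card_le_two (hE (π e₁)) (Finset.mem_filter.mpr ⟨he₁, rfl⟩)
        (Finset.mem_filter.mpr ⟨he₂, heq.symm⟩) hne (Finset.mem_filter.mpr ⟨hS hf, hfe⟩)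
        with rfl | rfl
      exacts [Or.inl hf, Or.inr hf]
  · rintro ⟨h1, h2⟩ c ⟨e, he, rfl⟩
    by_cases hc : (E.filter (π · = π e)).card = 1
    · exact ⟨e, h1 e he hc, rfl⟩
    obtain ⟨f, hf, hfe⟩ : ∃ f ∈ E.filter (π · = π e), f ≠ e :=
      Finset.exists_mem_ne (by
        have : 0 < (E.filter (π · = π e)).card :=
          Finset.card_pos.mpr ⟨e, Finset.mem_filter.mpr ⟨he, rfl⟩⟩
        omega) e
    rw [Finset.mem_filter] at hf
    rcases h2 e he f hf.1 hfe.symm hf.2.symm with h | h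
    exacts [⟨e, h, rfl⟩, ⟨f, h, hf.2⟩]

end Fibres

section Digraph

variable {α : Type} [DecidableEq α] {E S : Finset (α × α)} {v : α}

lemma indeg_pos_iff : 0 < indeg E v ↔ ∃ e ∈ E, e.2 = v := by
  simp [indeg, Finset.card_pos, Finset.filter_nonempty_iff]

lemma outdeg_pos_iff : 0 < outdeg E v ↔ ∃ e ∈ E, e.1 = v := by
  simp [outdeg, Finset.card_pos, Finset.filter_nonempty_iff]

lemma mem_verts_iff : v ∈ verts E ↔ 0 < outdeg E v ∨ 0 < indeg E v := by
  simp [verts, outdeg_pos_iff, indeg_pos_iff]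

lemma indeg_mono (h : S ⊆ E) (v : α) : indeg S v ≤ indeg E v :=
  Finset.card_le_card (Finset.filter_subset_filter _ h)

lemma outdeg_mono (h : S ⊆ E) (v : α) : outdeg S v ≤ outdeg E v :=
  Finset.card_le_card (Finset.filter_subset_filter _ h)

def RetainsDegrees (E S : Finset (α × α)) : Prop :=
  ∀ v, (0 < indeg E v → 0 < indeg S v) ∧ (0 < outdeg E v → 0 < outdeg S v)

lemma RetainsDegrees.verts_eq (hS : S ⊆ E) (h : RetainsDegrees E S) : verts S = verts E := by
  ext v
  simp only [mem_verts_iff]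
  have := indeg_mono hS v
  have := outdeg_mono hS v
  have := h v
  omega

lemma retainsDegrees_iff_aAdmissible (hS : S ⊆ E) (hin : ∀ v, indeg E v ≤ 2)
    (hout : ∀ v, outdeg E v ≤ 2) : RetainsDegrees E S ↔ AAdmissible E E S := by
  have heads := forall_card_filter_pos_iff Prod.snd hS hin
  have tails := forall_card_filter_pos_iff Prod.fst hS hout
  simp only [RetainsDegrees, AAdmissible, Shares, indeg, outdeg, forall_and, or_imp, heads, tails,
    hS, true_and]
  tauto

end Digraph

namespace IsPhyloNet

variable {α : Type} [DecidableEq α] {E S : Finset (α × α)} {p : ℕ} {X : Finset α} {v : α}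

lemma degs_of_mem (hN : IsPhyloNet E p X) (hv : v ∈ X) : indeg E v = 1 ∧ outdeg E v = 0 := by
  rw [← hN.leaves_eq] at hv
  exact (Finset.mem_filter.mp hv).2

lemma degs_le_two (hN : IsPhyloNet E p X) (v : α) : indeg E v ≤ 2 ∧ outdeg E v ≤ 2 := by
  by_cases hv : v ∈ verts E
  · by_cases h0 : indeg E v = 0
    · have := hN.root_outdeg v hv h0
      omega
    by_cases hX : v ∈ X
    · have := hN.degs_of_mem hX
      omega
    · have := hN.internal_deg v hv h0 hX
      omega
  · have := mem_verts_iff.not.mp hv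
    omega

lemma isSupportNet_of_retainsDegrees (hN : IsPhyloNet E p X) (hS : S ⊆ E)
    (h : RetainsDegrees E S) : IsSupportNet E S p X := by
  have hverts := h.verts_eq hS
  have hin v : indeg S v ≤ indeg E v ∧ (indeg S v = 0 ↔ indeg E v = 0) := by
    have := indeg_mono hS v
    have := (h v).1
    omega
  have hout v : outdeg S v ≤ outdeg E v ∧ (outdeg S v = 0 ↔ outdeg E v = 0) := by
    have := outdeg_mono hS v
    have := (h v).2
    omega
  refine ⟨hS, hverts, fun v hv => hN.acyclic v (Relation.TransGen.mono (fun _ _ h => hS h) v v hv),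
    ?_, ?_, ?_, ?_⟩
  · simpa only [hverts, (hin _).2] using hN.roots_card
  · intro v hv h0
    have := hN.root_outdeg v (hverts ▸ hv) ((hin v).2.mp h0)
    have := hout v
    omega
  · rw [← hN.leaves_eq, hverts]
    refine Finset.filter_congr fun v hv => ?_
    have := hin v
    have := hout v
    by_cases hX : v ∈ X
    · have := hN.degs_of_mem hX
      omega
    by_cases h0 : indeg E v = 0
    · omega
    have := hN.internal_deg v hv h0 hX
    omega
  · intro v hv h0 hX
    have := hN.internal_deg v (hverts ▸ hv) (by have := hin v; omega) hX
    have := hin v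
    have := hout v
    omega

lemma retainsDegrees_of_isSupportNet (hN : IsPhyloNet E p X) (h : IsSupportNet E S p X) :
    RetainsDegrees E S := by
  obtain ⟨hS, hverts, hNS⟩ := h
  have hroots : (verts E).filter (indeg E · = 0) = (verts E).filter (indeg S · = 0) := by
    refine Finset.eq_of_subset_of_card_le (Finset.monotone_filter_right _ fun v h => ?_) ?_
    · have := indeg_mono hS v
      omega
    · rw [hN.roots_card, ← hverts, hNS.roots_card]
  intro v
  constructor
  · intro hpos
    by_contra h0
    have hv : v ∈ verts E := mem_verts_iff.mpr (Or.inr hpos)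
    have : v ∈ (verts E).filter (indeg E · = 0) := hroots ▸ Finset.mem_filter.mpr ⟨hv, by omega⟩
    have := (Finset.mem_filter.mp this).2
    omega
  · intro hpos
    by_contra h0
    have hv : v ∈ verts S := hverts ▸ mem_verts_iff.mpr (Or.inl hpos)
    by_cases hi : indeg S v = 0
    · have := hNS.root_outdeg v hv hi
      omega
    by_cases hX : v ∈ X
    · have := hN.degs_of_mem hX
      omega
    · have := hNS.internal_deg v hv hi hX
      omega

lemma isSupportNet_iff (hN : IsPhyloNet E p X) (hS : S ⊆ E) :
    IsSupportNet E S p X ↔ RetainsDegrees E S :=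
  ⟨hN.retainsDegrees_of_isSupportNet, hN.isSupportNet_of_retainsDegrees hS⟩

end IsPhyloNet

lemma Shares.symm {α : Type} {e f : α × α} (h : Shares e f) : Shares f e :=
  h.imp Eq.symm Eq.symm

section ZigzagTrails

variable {α : Type} [DecidableEq α] {E Z T : Finset (α × α)} {e f : α × α}

lemma card_le_two_of_forall_shares (hin : indeg E e.2 ≤ 2) (hout : outdeg E e.1 ≤ 2)
    (he : e ∈ E) (hT : T ⊆ E) (heT : e ∉ T) (hsh : ∀ x ∈ T, Shares e x) : T.card ≤ 2 := by
  have hsub : T ⊆ (E.filter (·.1 = e.1)).erase e ∪ (E.filter (·.2 = e.2)).erase e := by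
    intro x hx
    have hxe : x ≠ e := fun h => heT (h ▸ hx)
    rcases hsh x hx with h | h
    · exact Finset.mem_union_left _ (by simp [hxe, hT hx, h])
    · exact Finset.mem_union_right _ (by simp [hxe, hT hx, h])
  have htails := Finset.card_erase_of_mem (s := E.filter (·.1 = e.1)) (a := e) (by simp [he])
  have hheads := Finset.card_erase_of_mem (s := E.filter (·.2 = e.2)) (a := e) (by simp [he])
  have := (Finset.card_le_card hsub).trans (Finset.card_union_le _ _)
  simp only [outdeg, indeg] at hin hout
  omega

lemma IsMaximalZigzagTrail.mem_of_shares (hin : ∀ v, indeg E v ≤ 2) (hout : ∀ v, outdeg E v ≤ 2)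
    (hZ : IsMaximalZigzagTrail E Z) (he : e ∈ Z) (hf : f ∈ E) (hsh : Shares e f) : f ∈ Z := by
  by_contra hfZ
  have hef : e ≠ f := fun h => hfZ (h ▸ he)
  obtain ⟨⟨hZE, l, -, hnd, hlZ, hch⟩, hmax⟩ := hZ
  have extend (t : List (α × α)) (hnd' : (e :: t).Nodup) (hfin : (e :: t).toFinset = Z)
      (hch' : (e :: t).IsChain Shares) : False := by
    refine hmax _ ⟨Finset.insert_subset hf hZE, f :: e :: t, List.cons_ne_nil _ _,
      List.nodup_cons.mpr ⟨?_, hnd'⟩, by simp [← hfin], List.isChain_cons_cons.mpr ⟨hsh.symm, hch'⟩⟩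
      (Finset.ssubset_insert hfZ)
    rwa [← List.mem_toFinset, hfin]
  -- If `e` ends the trail, `f` can be attached there; otherwise `e` has two trail neighbours,
  -- and with `f` these are three edges sharing an endpoint with `e`.
  obtain ⟨s, t, rfl⟩ := List.append_of_mem (List.mem_toFinset.mp (hlZ ▸ he))
  rcases s.eq_nil_or_concat with rfl | ⟨s, g₁, rfl⟩
  · exact extend t hnd hlZ hch
  rcases t with _ | ⟨g₂, t⟩
  · have hrev : e :: (s.concat g₁).reverse = (s.concat g₁ ++ [e]).reverse := by simp
    exact extend _ (hrev ▸ List.nodup_reverse.mpr hnd) (by rw [hrev, List.toFinset_reverse, hlZ])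
      (hrev ▸ List.isChain_reverse.mpr (hch.imp fun _ _ h => h.symm))
  rw [List.concat_eq_append, List.append_assoc, List.singleton_append] at hnd hch hlZ
  obtain ⟨-, hg₁e, hch⟩ := List.isChain_append_cons_cons.mp hch
  have heg₂ := (List.isChain_cons_cons.mp hch).1
  have hg : [g₁, e, g₂].Nodup := hnd.sublist (List.IsInfix.sublist ⟨s, t, by simp⟩)
  simp only [List.nodup_cons, List.mem_cons, List.not_mem_nil] at hg
  have hg₁ : g₁ ∈ Z := by simp [← hlZ]
  have hg₂ : g₂ ∈ Z := by simp [← hlZ]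
  have hcard : ({g₁, g₂, f} : Finset (α × α)).card = 3 :=
    Finset.card_eq_three.mpr ⟨g₁, g₂, f, by tauto, fun h => hfZ (h ▸ hg₁),
      fun h => hfZ (h ▸ hg₂), rfl⟩
  have hle := card_le_two_of_forall_shares (hin e.2) (hout e.1) (hZE he)
    (T := {g₁, g₂, f}) (by simp [Finset.insert_subset_iff, hZE hg₁, hZE hg₂, hf])
    (by simp; tauto) (by simp [hg₁e.symm, heg₂, hsh])
  omega

end ZigzagTrails

lemma aAdmissible_iff_forall_of_biUnion_eq {α ι : Type} [DecidableEq α] [Fintype ι]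
    {D E S : Finset (α × α)} (Z : ι → Finset (α × α)) (hcover : Finset.univ.biUnion Z = E)
    (hclosed : ∀ i, ∀ e ∈ Z i, ∀ f ∈ E, Shares e f → f ∈ Z i) (hS : S ⊆ E) :
    AAdmissible D E S ↔ ∀ i, AAdmissible D (Z i) (S ∩ Z i) := by
  have hmem (e : α × α) : e ∈ E ↔ ∃ i, e ∈ Z i := by simp [← hcover]
  constructor
  · rintro ⟨-, h₁, h₂⟩ i
    have hZE : Z i ⊆ E := fun e he => (hmem e).mpr ⟨i, he⟩
    refine ⟨Finset.inter_subset_right, fun e he hc => Finset.mem_inter.mpr ⟨h₁ e (hZE he) hc, he⟩,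
      fun e₁ he₁ e₂ he₂ hne hsh => ?_⟩
    simpa [he₁, he₂] using h₂ e₁ (hZE he₁) e₂ (hZE he₂) hne hsh
  · intro h
    refine ⟨hS, fun e he hc => ?_, fun e₁ he₁ e₂ he₂ hne hsh => ?_⟩
    · obtain ⟨i, hi⟩ := (hmem e).mp he
      exact Finset.inter_subset_left ((h i).2.1 e hi hc)
    · obtain ⟨i, hi⟩ := (hmem e₁).mp he₁
      exact ((h i).2.2 e₁ hi e₂ (hclosed i e₁ hi e₂ he₂ hsh) hne hsh).imp
        (Finset.inter_subset_left ·) (Finset.inter_subset_left ·)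

theorem stmt6_general (p : ℕ) (X : Finset V)
    (E : Finset (V × V)) (hN : IsPhyloNet E p X)
    (d : ℕ) (Z : Fin d → Finset (V × V))
    (hmax : ∀ i, IsMaximalZigzagTrail E (Z i))
    (hcover : Finset.univ.biUnion Z = E)
    (S : Finset (V × V)) (hS : S ⊆ E) :
    IsSupportNet E S p X ↔ ∀ i, AAdmissible E (Z i) (S ∩ Z i) := by
  have hin v := (hN.degs_le_two v).1
  have hout v := (hN.degs_le_two v).2
  calc IsSupportNet E S p X ↔ RetainsDegrees E S := hN.isSupportNet_iff hS
    _ ↔ AAdmissible E E S := retainsDegrees_iff_aAdmissible hS hin hout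
    _ ↔ ∀ i, AAdmissible E (Z i) (S ∩ Z i) :=
      aAdmissible_iff_forall_of_biUnion_eq Z hcover
        (fun i _ he _ => (hmax i).mem_of_shares hin hout he) hS

/-- `N[S]` is a support network of `N` iff `S ∩ E(Zᵢ)` is A-admissible in `E(Zᵢ)` for every
maximal zig-zag trail `Zᵢ` of the decomposition of `N`. -/
theorem stmt6 (p : ℕ) (hp : 1 ≤ p) (X : Finset V) (hX : X.Nonempty)
    (E : Finset (V × V)) (hN : IsPhyloNet E p X)
    (d : ℕ) (Z : Fin d → Finset (V × V))
    (hmax : ∀ i, IsMaximalZigzagTrail E (Z i))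
    (hdisj : ∀ i j, i ≠ j → Disjoint (Z i) (Z j))
    (hcover : Finset.univ.biUnion Z = E)
    (S : Finset (V × V)) (hS : S ⊆ E) :
    IsSupportNet E S p X ↔ ∀ i, AAdmissible E (Z i) (S ∩ Z i) :=
  stmt6_general p X E hN d Z hmax hcover S hS
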